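/- arXiv:1407.5964 — 3 statements merged into one kernel-verified Lean document; each statement's English description precedes it below -/
import Mathlib

section
/- Let p be a prime number, let l_0 ≤ l_1 ≤ … ≤ l_q be a non-decreasing sequence of natural numbers, and set n = p^{l_0} + p^{l_1} + … + p^{l_q}. Write the base-p expansion of n as n = λ_1·p^{m_1} + λ_2·p^{m_2} + … + λ_k·p^{m_k}, where m_1 < m_2 < … < m_k and 1 ≤ λ_i ≤ p−1 for each i. Then there exists a partition S_1, S_2, …, S_k of the index set {0, 1, …, q} such that for every i with 1 ≤ i ≤ k one has ∑_{j ∈ S_i} p^{l_j} = λ_i·p^{m_i}. -/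
/-!
Peel off the top digit `λ p ^ M`. Since the exponents `l j` are sorted, the terms of the
longest prefix whose sum is at most the value `r` of the lower digits are followed by a
tail that is a multiple of `p ^ e`, `e` being its first exponent; as the tail is below
`p ^ (M + 1)`, `e ≤ M`, so `p ^ e` also divides the overshoot `r - (prefix sum) < p ^ e`,
which therefore vanishes. Thus the prefix sums to `r`, the tail to `λ p ^ M`, and induction
on the number of digits partitions the prefix.
-/

open Finset

lemma sum_mul_pow_lt_pow {p M k : ℕ} (hp : 0 < p) {m lam : Fin k → ℕ} (hm : StrictMono m)
    (hlam : ∀ i, lam i < p) (hmM : ∀ i, m i < M) : ∑ i, lam i * p ^ m i < p ^ M := by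
  have hgeom := geom_sum_mul_add (p - 1) M
  rw [Nat.sub_one_add_one hp.ne'] at hgeom
  calc ∑ i, lam i * p ^ m i
      ≤ ∑ i, (p - 1) * p ^ m i :=
        sum_le_sum fun i _ => Nat.mul_le_mul_right _ (Nat.le_sub_one_of_lt (hlam i))
    _ = ∑ e ∈ univ.image m, (p - 1) * p ^ e :=
        (sum_image (f := fun e => (p - 1) * p ^ e) hm.injective.injOn).symm
    _ ≤ ∑ e ∈ range M, (p - 1) * p ^ e :=
        sum_le_sum_of_subset (image_subset_iff.2 fun i _ => mem_range.2 (hmM i))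
    _ < p ^ M := by rw [← mul_sum]; linarith [mul_comm (p - 1) (∑ e ∈ range M, p ^ e)]

lemma exists_sum_range_pow_eq {p : ℕ} (hp : 1 < p) {l : ℕ → ℕ} (hl : Monotone l)
    {t r N M : ℕ}
    (hsum : ∑ j ∈ range t, p ^ l j = r + N) (hN : p ^ M ∣ N) (hlt : r + N < p ^ (M + 1)) :
    ∃ s ≤ t, ∑ j ∈ range s, p ^ l j = r := by
  set P : ℕ → Prop := fun s => ∑ j ∈ range s, p ^ l j ≤ r
  obtain ⟨s, hs⟩ : ∃ s, s = Nat.findGreatest P t := ⟨_, rfl⟩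
  have hst : s ≤ t := hs ▸ Nat.findGreatest_le t
  have hfs : P s := hs ▸ Nat.findGreatest_spec (Nat.zero_le t) (by simp [P])
  refine ⟨s, hst, ?_⟩
  rcases hst.eq_or_lt with rfl | hst'
  · omega
  have hr_lt : r < ∑ j ∈ range s, p ^ l j + p ^ l s := by
    have : ¬ P (s + 1) := Nat.findGreatest_is_greatest (by omega) hst'
    simp only [P, sum_range_succ, not_le] at this
    omega
  have htail : ∑ j ∈ Ico s t, p ^ l j = (r - ∑ j ∈ range s, p ^ l j) + N := by
    have := sum_range_add_sum_Ico (fun j => p ^ l j) hst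
    omega
  have hdvd_tail : p ^ l s ∣ ∑ j ∈ Ico s t, p ^ l j :=
    dvd_sum fun j hj => pow_dvd_pow p (hl (mem_Ico.1 hj).1)
  have hls : l s ≤ M := by
    have : p ^ l s ≤ ∑ j ∈ Ico s t, p ^ l j :=
      single_le_sum (f := fun j => p ^ l j) (fun _ _ => Nat.zero_le _)
        (mem_Ico.2 ⟨le_rfl, hst'⟩)
    have := (Nat.pow_lt_pow_iff_right hp).1 (by omega : p ^ l s < p ^ (M + 1))
    omega
  have hdvd : p ^ l s ∣ r - ∑ j ∈ range s, p ^ l j :=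
    (Nat.dvd_add_left ((pow_dvd_pow p hls).trans hN)).1 (htail ▸ hdvd_tail)
  have := Nat.eq_zero_of_dvd_of_lt hdvd (by omega)
  omega

/- A partition is encoded by a labelling `c`, with labels in `ℕ` rather than `Fin k` so that
`k = 0` is possible. -/
lemma exists_label_sum_eq_digit {p : ℕ} (hp : 1 < p) {l : ℕ → ℕ} (hl : Monotone l) :
    ∀ {k : ℕ} (m lam : Fin k → ℕ), StrictMono m → (∀ i, lam i < p) → ∀ t,
      ∑ j ∈ range t, p ^ l j = ∑ i, lam i * p ^ m i →
      ∃ c : ℕ → ℕ, (∀ j < t, c j < k) ∧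
        ∀ i : Fin k, ∑ j ∈ range t with c j = i, p ^ l j = lam i * p ^ m i
  | 0, m, lam, _, _, t, hsum => by
    have ht : t = 0 := by
      by_contra ht
      have := single_le_sum (f := fun j => p ^ l j) (fun _ _ => Nat.zero_le _)
        (mem_range.2 (Nat.pos_of_ne_zero ht))
      simp only [hsum, univ_eq_empty, sum_empty] at this
      exact (pow_pos (by omega) _).ne' (Nat.le_zero.1 this)
    exact ⟨fun _ => 0, by simp [ht], fun i => i.elim0⟩
  | k + 1, m, lam, hm, hlam, t, hsum => by
    rw [Fin.sum_univ_castSucc] at hsum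
    have hm' : StrictMono fun i : Fin k => m i.castSucc := hm.comp Fin.strictMono_castSucc
    have hrest : ∑ i : Fin k, lam i.castSucc * p ^ m i.castSucc < p ^ m (Fin.last k) :=
      sum_mul_pow_lt_pow (by omega) hm' (fun i => hlam _) fun i => hm (Fin.castSucc_lt_last i)
    obtain ⟨s, hst, hs⟩ := exists_sum_range_pow_eq hp hl hsum (dvd_mul_left _ _) (by
      calc _ < (lam (Fin.last k) + 1) * p ^ m (Fin.last k) := by linarith
        _ ≤ p * p ^ m (Fin.last k) := Nat.mul_le_mul_right _ (hlam _)
        _ = _ := (pow_succ' _ _).symm)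
    obtain ⟨c, hck, hc⟩ := exists_label_sum_eq_digit hp hl _ _ hm' (fun i => hlam _) s hs
    set c' : ℕ → ℕ := fun j => if j < s then c j else k
    refine ⟨c', fun j _ => ?_, Fin.lastCases ?_ fun i => ?_⟩
    · simp only [c']
      split_ifs with h
      exacts [(hck j h).trans (lt_add_one k), lt_add_one k]
    · have hfiber : {j ∈ range t | c' j = Fin.last k} = Ico s t := by
        ext j
        have := hck j
        simp only [c', mem_filter, mem_range, mem_Ico, Fin.val_last]
        split_ifs <;> omega
      rw [hfiber]
      have := sum_range_add_sum_Ico (fun j => p ^ l j) hst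
      omega
    · have hfiber : {j ∈ range t | c' j = i.castSucc} = {j ∈ range s | c j = i} := by
        ext j
        have := i.isLt
        simp only [c', mem_filter, mem_range, Fin.val_castSucc]
        split_ifs <;> omega
      rw [hfiber, hc i]

/-- Let `p` be a prime, `l 0 ≤ l 1 ≤ … ≤ l q` a non-decreasing sequence of naturals and
`n = ∑ j, p ^ l j`.  Write the base-`p` expansion of `n` as
`n = ∑ i, lam i * p ^ m i` with `m` strictly increasing and `1 ≤ lam i ≤ p - 1`.
Then there is a partition `S 1, …, S k` of the index set `{0, …, q}` such that
`∑_{j ∈ S i} p ^ l j = lam i * p ^ m i` for every `i`. -/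
theorem stmt0 (p : ℕ) (hp : p.Prime) (q : ℕ) (l : Fin (q + 1) → ℕ)
    (hl : Monotone l) (n : ℕ) (hn : n = ∑ j : Fin (q + 1), p ^ l j)
    (k : ℕ) (m : Fin k → ℕ) (lam : Fin k → ℕ)
    (hm : StrictMono m) (hlam : ∀ i, 1 ≤ lam i ∧ lam i ≤ p - 1)
    (hexp : n = ∑ i : Fin k, lam i * p ^ m i) :
    ∃ S : Fin k → Finset (Fin (q + 1)),
      (∀ i j, i ≠ j → Disjoint (S i) (S j)) ∧
      (Finset.univ.biUnion S = Finset.univ) ∧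
      (∀ i, ∑ j ∈ S i, p ^ l j = lam i * p ^ m i) := by
  set l' : ℕ → ℕ := fun j => l (Fin.clamp j q)
  have hl' : Monotone l' := hl.comp fun a b h => by
    simp only [Fin.clamp, Fin.mk_le_mk]
    omega
  have hl'_val (j : Fin (q + 1)) : l' j = l j := by
    simp only [l', Fin.clamp, Nat.min_eq_left (Nat.le_of_lt_succ j.isLt)]
  obtain ⟨c, hck, hc⟩ := exists_label_sum_eq_digit hp.one_lt hl' m lam hm
    (fun i => by have := hp.one_lt; have := hlam i; omega) (q + 1) (by
      rw [← Fin.sum_univ_eq_sum_range (fun j => p ^ l' j)]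
      simp only [hl'_val, ← hn, hexp])
  refine ⟨fun i => {j | c j = i}, fun i i' hii' => ?_, ?_, fun i => ?_⟩
  · exact disjoint_filter.2 fun j _ hi hi' => hii' (Fin.ext (hi.symm.trans hi'))
  · exact eq_univ_of_forall fun j =>
      mem_biUnion.2 ⟨⟨c j, hck j j.isLt⟩, mem_univ _, by simp⟩
  · rw [← hc i, sum_filter, sum_filter,
      ← Fin.sum_univ_eq_sum_range (fun j => if c j = i then p ^ l' j else 0)]
    simp only [hl'_val]
end

section
/- Let p be a prime number and let λ = (λ_1, …, λ_t) be a sequence of positive natural numbers with λ_1 + … + λ_t = d. Let δ be a natural number such that δ > max{λ_1, …, λ_t} and such that for every index i and every natural number s with 1 ≤ s ≤ d·p^{λ_i} − λ_i, the p-adic length of p^δ − s is strictly greater than d. Suppose l_1 ≤ l_2 ≤ … ≤ l_d is a non-decreasing sequence of natural numbers satisfying λ_1 + p^{δ}·λ_2 + p^{2δ}·λ_3 + … + p^{(t−1)δ}·λ_t = p^{l_1} + p^{l_2} + … + p^{l_d}. Then there exists a unique partition of {1, …, d} into t subsets E_1, …, E_t such that: (i) for every i with 1 ≤ i ≤ t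 one has ∑_{h ∈ E_i} p^{l_h} = p^{(i−1)δ}·λ_i; (ii) each subset E_i is an interval of consecutive natural numbers {k, k+1, …, k+r}; and (iii) the cardinality of E_1 is at most λ_1. -/
/-!
Write `a h = p ^ l h` and `w i = p ^ (i * δ) * λ i`. The blocks are obtained by cutting the
cumulative sums of `a` at the cumulative sums `w 0 + ⋯ + w (j - 1)`. These cuts exist: the
longest prefix of `a` with sum at most `w 0 + ⋯ + w (j - 1) < p ^ (j * δ)` has exactly that sum,
since (`l` being monotone) the remaining terms are all divisible by the first of them, while
the remaining targets are divisible by `p ^ (j * δ)`.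

For uniqueness, the hypothesis on `p`-adic lengths gives `d * λ i < p ^ δ`, hence
`d * w i < w m` for `i < m`. An interval block of index `m` therefore cannot precede an element
of a block of index `i < m`: its at most `d` terms would each be at most `w i`. Blocks that
appear in index order are determined by their sums.
-/

/-- The `p`-adic length of a natural number `m`: the sum of the digits of its base-`p`
expansion, i.e. the minimal number of (not necessarily distinct) powers of `p` whose
sum equals `m`. -/
def padicLength (p m : ℕ) : ℕ := (Nat.digits p m).sum

open Finset

lemma Nat.exists_lt_le_succ {f : ℕ → ℕ} {x : ℕ} :
    ∀ {t : ℕ}, f 0 < x → x ≤ f t → ∃ i < t, f i < x ∧ x ≤ f (i + 1)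
  | 0, h0, ht => absurd h0 (not_lt.2 ht)
  | t + 1, h0, ht => by
    by_cases hx : x ≤ f t
    · obtain ⟨i, hi, hfi⟩ := Nat.exists_lt_le_succ h0 hx
      exact ⟨i, hi.trans (Nat.lt_succ_self t), hfi⟩
    · exact ⟨t, Nat.lt_succ_self t, not_le.1 hx, ht⟩

namespace PowerSumPartition

section PrefixSum

variable {n : ℕ} (a : Fin n → ℕ)

def prefixSum (k : ℕ) : ℕ := ∑ h with h.val < k, a h

@[simp]
lemma prefixSum_zero : prefixSum a 0 = 0 := by
  simp [prefixSum]

lemma prefixSum_of_le {k : ℕ} (hk : n ≤ k) : prefixSum a k = ∑ h, a h :=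
  sum_congr (filter_true_of_mem fun h _ => h.isLt.trans_le hk) fun _ _ => rfl

lemma prefixSum_succ {k : ℕ} (hk : k < n) : prefixSum a (k + 1) = prefixSum a k + a ⟨k, hk⟩ := by
  rw [prefixSum, prefixSum, add_comm _ (a _), ← sum_insert (by simp)]
  congr 1
  ext x
  simp only [mem_filter, mem_univ, true_and, mem_insert, Fin.ext_iff]
  omega

lemma prefixSum_monotone : Monotone (prefixSum a) := fun _ _ hk =>
  sum_le_sum_of_subset fun h => by simp only [mem_filter, mem_univ, true_and]; omega

lemma prefixSum_strictMonoOn (ha : ∀ h, 0 < a h) : StrictMonoOn (prefixSum a) (Set.Iic n) := by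
  intro k _ k' hk' hkk'
  obtain ⟨j, rfl⟩ : ∃ j, k' = j + 1 := ⟨k' - 1, by omega⟩
  have hj : j < n := hk'
  calc prefixSum a k ≤ prefixSum a j := prefixSum_monotone a (by omega)
    _ < prefixSum a j + a ⟨j, hj⟩ := Nat.lt_add_of_pos_right (ha _)
    _ = prefixSum a (j + 1) := (prefixSum_succ a hj).symm

lemma prefixSum_add_sum_filter_le (k : ℕ) :
    prefixSum a k + ∑ h with k ≤ h.val, a h = ∑ h, a h := by
  unfold prefixSum
  simpa only [not_lt] using sum_filter_add_sum_filter_not univ (fun h : Fin n => h.val < k) a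

lemma prefixSum_add_sum_filter_Ico {k k' : ℕ} (hkk' : k ≤ k') :
    prefixSum a k + ∑ h with k ≤ h.val ∧ h.val < k', a h = prefixSum a k' := by
  rw [prefixSum, prefixSum, ← sum_union]
  · congr 1
    ext h
    simp only [mem_union, mem_filter, mem_univ, true_and]
    omega
  · exact disjoint_filter.2 fun _ _ h1 h2 => by omega

end PrefixSum

lemma prefixSum_lt_pow {t b : ℕ} {c : Fin t → ℕ} (hc : ∀ i, c i < b) {j : ℕ} (hj : j ≤ t) :
    prefixSum (fun i => b ^ i.val * c i) j < b ^ j := by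
  induction j with
  | zero => simp
  | succ j ih =>
    have hjt : j < t := hj
    calc prefixSum (fun i => b ^ i.val * c i) (j + 1)
        = prefixSum (fun i => b ^ i.val * c i) j + b ^ j * c ⟨j, hjt⟩ := prefixSum_succ _ hjt
      _ < b ^ j + b ^ j * c ⟨j, hjt⟩ := Nat.add_lt_add_right (ih hjt.le) _
      _ = b ^ j * (c ⟨j, hjt⟩ + 1) := by ring
      _ ≤ b ^ (j + 1) := by rw [pow_succ]; exact Nat.mul_le_mul_left _ (hc _)

/-- Greedy step: the largest prefix sum not exceeding `A` is `A` itself, for otherwise the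
remainder would be a positive number below `p ^ min (l k) e` divisible by it. -/
lemma exists_prefixSum_pow_eq {n p e A M : ℕ} (hp : 0 < p) {l : Fin n → ℕ} (hl : Monotone l)
    (htot : ∑ h, p ^ l h = A + M) (hM : p ^ e ∣ M) (hA : A < p ^ e) :
    ∃ k ≤ n, prefixSum (fun h => p ^ l h) k = A := by
  set a : Fin n → ℕ := fun h => p ^ l h
  set k := Nat.findGreatest (fun k => prefixSum a k ≤ A) n
  have hkn : k ≤ n := Nat.findGreatest_le n
  have hkA : prefixSum a k ≤ A :=
    Nat.findGreatest_spec (P := fun k => prefixSum a k ≤ A) (Nat.zero_le n) (by simp)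
  refine ⟨k, hkn, hkA.antisymm (not_lt.1 fun hlt => ?_)⟩
  have hk : k < n := hkn.lt_of_ne fun hkn => by
    rw [hkn, prefixSum_of_le a le_rfl, htot] at hlt
    omega
  have hnext : A < prefixSum a k + p ^ l ⟨k, hk⟩ := by
    rw [← prefixSum_succ a hk]
    exact not_le.1 <|
      Nat.findGreatest_is_greatest (P := fun k => prefixSum a k ≤ A) (Nat.lt_succ_self k) hk
  have htail : prefixSum a k + ∑ h with k ≤ h.val, a h = A + M :=
    (prefixSum_add_sum_filter_le a k).trans htot
  set g := p ^ min (l ⟨k, hk⟩) e with hg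
  have hg_tail : g ∣ ∑ h with k ≤ h.val, a h :=
    dvd_sum fun h hh => pow_dvd_pow p ((min_le_left _ _).trans (hl (mem_filter.1 hh).2))
  have hgM : g ∣ M := (pow_dvd_pow p (min_le_right _ _)).trans hM
  have hg_rem : g ∣ A - prefixSum a k := by
    have := Nat.dvd_sub hg_tail hgM
    rwa [show ∑ h with k ≤ h.val, a h - M = A - prefixSum a k by omega] at this
  have hrem_lt : A - prefixSum a k < g := by
    rw [hg, (pow_right_mono₀ (M₀ := ℕ) hp).map_min]
    exact lt_min (by omega) (by omega)
  have := Nat.eq_zero_of_dvd_of_lt hg_rem hrem_lt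
  omega

lemma exists_prefixSum_eq_prefixSum_digits {n t p δ : ℕ} (hp : 0 < p) {l : Fin n → ℕ}
    (hl : Monotone l) {c : Fin t → ℕ} (hc : ∀ i, c i < p ^ δ)
    (hsum : ∑ h, p ^ l h = ∑ i, p ^ (i.val * δ) * c i) {j : ℕ} (hj : j ≤ t) :
    ∃ k ≤ n, prefixSum (fun h => p ^ l h) k = prefixSum (fun i => p ^ (i.val * δ) * c i) j :=
  exists_prefixSum_pow_eq hp hl (e := j * δ) (M := ∑ i with j ≤ i.val, p ^ (i.val * δ) * c i)
    (by rw [hsum, prefixSum_add_sum_filter_le])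
    (dvd_sum fun i hi => (pow_dvd_pow p (Nat.mul_le_mul_right δ (mem_filter.1 hi).2)).mul_right _)
    (by simpa only [pow_mul'] using prefixSum_lt_pow hc hj)

section PrefixBlock

variable {n t : ℕ} (a : Fin n → ℕ) (w : Fin t → ℕ)

/-- `h` is in block `i` when `a 0 + ⋯ + a h` lies in `(w 0 + ⋯ + w (i - 1), w 0 + ⋯ + w i]`. -/
def prefixBlock (i : Fin t) : Finset (Fin n) :=
  {h | prefixSum w i.val < prefixSum a (h.val + 1) ∧
    prefixSum a (h.val + 1) ≤ prefixSum w (i.val + 1)}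

lemma prefixBlock_disjoint {i j : Fin t} (hij : i ≠ j) :
    Disjoint (prefixBlock a w i) (prefixBlock a w j) := by
  refine disjoint_filter.2 fun h _ hi hj => ?_
  rcases lt_or_gt_of_ne hij with hlt | hlt
  · have := prefixSum_monotone w (show _ + 1 ≤ _ from hlt)
    omega
  · have := prefixSum_monotone w (show _ + 1 ≤ _ from hlt)
    omega

lemma biUnion_prefixBlock (ha : ∀ h, 0 < a h) (hsum : ∑ h, a h = ∑ i, w i) :
    univ.biUnion (prefixBlock a w) = univ := by
  refine eq_univ_of_forall fun h => mem_biUnion.2 ?_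
  have hlow : prefixSum w 0 < prefixSum a (h.val + 1) := by
    rw [prefixSum_zero, prefixSum_succ a h.isLt]
    exact (ha h).trans_le (Nat.le_add_left _ _)
  have hup : prefixSum a (h.val + 1) ≤ prefixSum w t := by
    rw [prefixSum_of_le w le_rfl, ← hsum, ← prefixSum_of_le a le_rfl]
    exact prefixSum_monotone a h.isLt
  obtain ⟨i, hi, hblock⟩ := Nat.exists_lt_le_succ hlow hup
  exact ⟨⟨i, hi⟩, mem_univ _, mem_filter.2 ⟨mem_univ _, hblock⟩⟩

variable {a w}

lemma exists_prefixBlock_eq_filter (ha : ∀ h, 0 < a h) (hw : ∀ i, 0 < w i)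
    (hc : ∀ j ≤ t, ∃ k ≤ n, prefixSum a k = prefixSum w j) (i : Fin t) :
    ∃ k k', k < k' ∧ k' ≤ n ∧ prefixSum a k' = prefixSum a k + w i ∧
      prefixBlock a w i = ({h | k ≤ h.val ∧ h.val < k'} : Finset (Fin n)) := by
  obtain ⟨k, hk, hki⟩ := hc i i.isLt.le
  obtain ⟨k', hk', hk'i⟩ := hc (i + 1) i.isLt
  have hstep : prefixSum a k' = prefixSum a k + w i := by
    rw [hki, hk'i, prefixSum_succ w i.isLt]
  have hmono := prefixSum_strictMonoOn a ha
  refine ⟨k, k', (hmono.lt_iff_lt hk hk').1 (by rw [hstep]; exact Nat.lt_add_of_pos_right (hw i)),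
    hk', hstep, ?_⟩
  ext h
  have hh : h.val + 1 ∈ Set.Iic n := h.isLt
  simp only [prefixBlock, mem_filter, mem_univ, true_and, ← hki, ← hk'i,
    hmono.lt_iff_lt hk hh, hmono.le_iff_le hh hk']
  omega

lemma sum_prefixBlock (ha : ∀ h, 0 < a h) (hw : ∀ i, 0 < w i)
    (hc : ∀ j ≤ t, ∃ k ≤ n, prefixSum a k = prefixSum w j) (i : Fin t) :
    ∑ h ∈ prefixBlock a w i, a h = w i := by
  obtain ⟨k, k', hkk', -, hstep, hblock⟩ := exists_prefixBlock_eq_filter ha hw hc i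
  have := prefixSum_add_sum_filter_Ico a hkk'.le
  rw [hblock]
  omega

lemma exists_prefixBlock_eq_Icc (ha : ∀ h, 0 < a h) (hw : ∀ i, 0 < w i)
    (hc : ∀ j ≤ t, ∃ k ≤ n, prefixSum a k = prefixSum w j) (i : Fin t) :
    ∃ u v : Fin n, prefixBlock a w i = Icc u v := by
  obtain ⟨k, k', hkk', hk', -, hblock⟩ := exists_prefixBlock_eq_filter ha hw hc i
  refine ⟨⟨k, by omega⟩, ⟨k' - 1, by omega⟩, ?_⟩
  rw [hblock]
  ext h
  simp only [mem_filter, mem_univ, true_and, mem_Icc, Fin.le_def]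
  omega

end PrefixBlock

section Uniqueness

variable {n t : ℕ} {a : Fin n → ℕ} {w : Fin t → ℕ} {E : Fin t → Finset (Fin n)}

/-- If a block `E m` of larger target began before an element `x` of an earlier block `E i`,
it would lie entirely before `x`, so its sum would be at most `n * a x ≤ n * w i < w m`. -/
lemma lt_of_mem_of_mem (hmono : Monotone a) (hw : ∀ i m, i < m → n * w i < w m)
    (hdisj : ∀ i j, i ≠ j → Disjoint (E i) (E j)) (hsum : ∀ i, ∑ h ∈ E i, a h = w i)
    (hint : ∀ i, ∃ u v, E i = Icc u v) (i m : Fin t) (him : i < m) (x : Fin n) (hx : x ∈ E i)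
    (y : Fin n) (hy : y ∈ E m) : x < y := by
  by_contra! hyx
  obtain ⟨u, v, huv⟩ := hint m
  have hxm : x ∉ E m := disjoint_left.1 (hdisj i m him.ne) hx
  rw [huv, mem_Icc] at hy hxm
  have hvx : v < x := not_le.1 fun hxv => hxm ⟨hy.1.trans hyx, hxv⟩
  have hbound : ∀ z ∈ E m, a z ≤ w i := fun z hz =>
    calc a z ≤ a x := hmono ((mem_Icc.1 (huv ▸ hz)).2.trans hvx.le)
      _ ≤ w i := hsum i ▸ single_le_sum (fun _ _ => Nat.zero_le _) hx
  have := calc w m = ∑ z ∈ E m, a z := (hsum m).symm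
    _ ≤ #(E m) * w i := by simpa using sum_le_card_nsmul _ _ _ hbound
    _ ≤ n * w i := Nat.mul_le_mul_right _ (card_le_univ _ |>.trans_eq (Fintype.card_fin n))
    _ < w m := hw i m him
  exact lt_irrefl _ this

lemma sum_biUnion_filter_lt (hdisj : ∀ i j, i ≠ j → Disjoint (E i) (E j))
    (hsum : ∀ i, ∑ h ∈ E i, a h = w i) (j : ℕ) :
    ∑ h ∈ ({i | i.val < j} : Finset (Fin t)).biUnion E, a h = prefixSum w j := by
  rw [sum_biUnion fun i _ k _ hik => hdisj i k hik]
  exact sum_congr rfl fun i _ => hsum i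

lemma subset_prefixBlock (ha : ∀ h, 0 < a h)
    (horder : ∀ i m, i < m → ∀ x ∈ E i, ∀ y ∈ E m, x < y)
    (hdisj : ∀ i j, i ≠ j → Disjoint (E i) (E j)) (hcov : univ.biUnion E = univ)
    (hsum : ∀ i, ∑ h ∈ E i, a h = w i) (i : Fin t) : E i ⊆ prefixBlock a w i := by
  intro h hh
  refine mem_filter.2 ⟨mem_univ _, ?_, ?_⟩
  · calc prefixSum w i = ∑ x ∈ ({k | k.val < i.val} : Finset (Fin t)).biUnion E, a x :=
          (sum_biUnion_filter_lt hdisj hsum _).symm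
      _ ≤ prefixSum a h := sum_le_sum_of_subset fun x hx => by
          obtain ⟨k, hk, hxk⟩ := mem_biUnion.1 hx
          exact mem_filter.2 ⟨mem_univ _, horder k i (mem_filter.1 hk).2 x hxk h hh⟩
      _ < prefixSum a (h.val + 1) := by
          rw [prefixSum_succ a h.isLt]
          exact Nat.lt_add_of_pos_right (ha _)
  · calc prefixSum a (h.val + 1)
        ≤ ∑ x ∈ ({k | k.val < i.val + 1} : Finset (Fin t)).biUnion E, a x :=
          sum_le_sum_of_subset fun x hx => by
            obtain ⟨k, -, hxk⟩ := mem_biUnion.1 (hcov ▸ mem_univ x)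
            refine mem_biUnion.2 ⟨k, mem_filter.2 ⟨mem_univ _, ?_⟩, hxk⟩
            by_contra! hik
            have := horder i k hik h hh x hxk
            simp only [mem_filter, mem_univ, true_and] at hx
            omega
      _ = prefixSum w (i.val + 1) := sum_biUnion_filter_lt hdisj hsum _

lemma eq_prefixBlock (ha : ∀ h, 0 < a h)
    (horder : ∀ i m, i < m → ∀ x ∈ E i, ∀ y ∈ E m, x < y)
    (hdisj : ∀ i j, i ≠ j → Disjoint (E i) (E j)) (hcov : univ.biUnion E = univ)
    (hsum : ∀ i, ∑ h ∈ E i, a h = w i) : E = prefixBlock a w := by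
  funext i
  refine (subset_prefixBlock ha horder hdisj hcov hsum i).antisymm fun h hh => ?_
  obtain ⟨m, -, hm⟩ := mem_biUnion.1 (hcov ▸ mem_univ h)
  obtain rfl : m = i := by
    by_contra hmi
    exact disjoint_left.1 (prefixBlock_disjoint a w hmi)
      (subset_prefixBlock ha horder hdisj hcov hsum m hm) hh
  exact hm

end Uniqueness

/-- Take `s = d * p ^ m - m`: were `s ≥ p ^ δ`, then `p ^ δ - s = 0` would have `p`-adic
length `0`. -/
lemma mul_lt_pow_of_lt_padicLength {p d δ m : ℕ} (hp : 2 ≤ p) (hd : 0 < d) (hm : 0 < m)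
    (hlen : ∀ s, 1 ≤ s → s ≤ d * p ^ m - m → d < padicLength p (p ^ δ - s)) :
    d * m < p ^ δ := by
  have hmp : m * p ≤ p ^ m := by
    obtain ⟨k, rfl⟩ : ∃ k, m = k + 1 := ⟨m - 1, by omega⟩
    rw [pow_succ]
    exact Nat.mul_le_mul_right p (Nat.lt_pow_self (by omega))
  have h2 : 2 * (d * m) ≤ d * p ^ m :=
    calc 2 * (d * m) = d * (m * 2) := by ring
      _ ≤ d * (m * p) := by gcongr
      _ ≤ d * p ^ m := Nat.mul_le_mul_left d hmp
  have hdm : m ≤ d * m := Nat.le_mul_of_pos_left m hd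
  have hs := hlen (d * p ^ m - m) (by omega) le_rfl
  have : d * p ^ m - m < p ^ δ := by
    by_contra! hge
    rw [Nat.sub_eq_zero_of_le hge] at hs
    simp [padicLength] at hs
  omega

lemma mul_pow_mul_lt {t d p δ : ℕ} (hp : 0 < p) {lam : Fin t → ℕ} (hpos : ∀ i, 0 < lam i)
    (hlt : ∀ i, d * lam i < p ^ δ) (i m : Fin t) (him : i < m) :
    d * (p ^ (i.val * δ) * lam i) < p ^ (m.val * δ) * lam m :=
  calc d * (p ^ (i.val * δ) * lam i) = p ^ (i.val * δ) * (d * lam i) := by ring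
    _ < p ^ (i.val * δ) * p ^ δ := Nat.mul_lt_mul_of_pos_left (hlt i) (pow_pos hp _)
    _ = p ^ ((i.val + 1) * δ) := by ring
    _ ≤ p ^ (m.val * δ) := Nat.pow_le_pow_right hp (Nat.mul_le_mul_right δ him)
    _ ≤ p ^ (m.val * δ) * lam m := Nat.le_mul_of_pos_right _ (hpos m)

end PowerSumPartition

open PowerSumPartition

theorem stmt3_general (p : ℕ) (hp : p.Prime) (t : ℕ) (ht : 0 < t) (lam : Fin t → ℕ)
    (hlam_pos : ∀ i, 0 < lam i) (d : ℕ) (hd : ∑ i : Fin t, lam i = d)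
    (δ : ℕ)
    (hlen : ∀ i : Fin t, ∀ s : ℕ, 1 ≤ s → s ≤ d * p ^ lam i - lam i →
      d < padicLength p (p ^ δ - s))
    (l : Fin d → ℕ) (hl : Monotone l)
    (hsum : ∑ i : Fin t, lam i * p ^ (i.val * δ) = ∑ h : Fin d, p ^ l h) :
    ∃! E : Fin t → Finset (Fin d),
      (∀ i j, i ≠ j → Disjoint (E i) (E j)) ∧
      (Finset.univ.biUnion E = Finset.univ) ∧
      (∀ i, ∑ h ∈ E i, p ^ l h = p ^ (i.val * δ) * lam i) ∧
      (∀ i, ∃ a b : Fin d, E i = Finset.Icc a b) ∧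
      (E ⟨0, ht⟩).card ≤ lam ⟨0, ht⟩ := by
  have hp0 := hp.pos
  have hd0 : 0 < d := hd ▸ (hlam_pos ⟨0, ht⟩).trans_le (single_le_sum (by simp) (mem_univ _))
  have hdlam : ∀ i, d * lam i < p ^ δ := fun i =>
    mul_lt_pow_of_lt_padicLength hp.two_le hd0 (hlam_pos i) (hlen i)
  set a : Fin d → ℕ := fun h => p ^ l h
  set w : Fin t → ℕ := fun i => p ^ (i.val * δ) * lam i
  have ha : ∀ h, 0 < a h := fun h => pow_pos hp0 _
  have hw : ∀ i, 0 < w i := fun i => Nat.mul_pos (pow_pos hp0 _) (hlam_pos i)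
  have hsum' : ∑ h, a h = ∑ i, w i := by
    simp only [a, w, mul_comm _ (lam _)]
    exact hsum.symm
  have hc : ∀ j ≤ t, ∃ k ≤ d, prefixSum a k = prefixSum w j := fun j hj =>
    exists_prefixSum_eq_prefixSum_digits hp0 hl
      (fun i => (Nat.le_mul_of_pos_left _ hd0).trans_lt (hdlam i)) hsum' hj
  refine ⟨prefixBlock a w, ⟨fun _ _ => prefixBlock_disjoint a w, biUnion_prefixBlock a w ha hsum',
    sum_prefixBlock ha hw hc, exists_prefixBlock_eq_Icc ha hw hc, ?_⟩, ?_⟩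
  · simpa [w] using (card_nsmul_le_sum _ a 1 fun h _ => ha h).trans_eq
      (sum_prefixBlock ha hw hc ⟨0, ht⟩)
  · rintro E ⟨hdisj, hcov, hsumE, hint, -⟩
    have hmono : Monotone a := fun _ _ hxy => Nat.pow_le_pow_right hp0 (hl hxy)
    have horder := lt_of_mem_of_mem hmono (mul_pow_mul_lt hp0 hlam_pos hdlam) hdisj hsumE hint
    exact eq_prefixBlock ha horder hdisj hcov hsumE

/-- Let `p` be prime and `lam = (λ₁, …, λ_t)` positive naturals with `λ₁ + ⋯ + λ_t = d`.
Let `δ` satisfy `δ > max λᵢ` and suppose that for every `i` and every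
`1 ≤ s ≤ d·p^{λᵢ} − λᵢ` the `p`-adic length of `p^δ − s` is `> d`.
If `l₁ ≤ … ≤ l_d` satisfies `λ₁ + p^δ·λ₂ + ⋯ + p^{(t−1)δ}·λ_t = p^{l₁} + ⋯ + p^{l_d}`,
then there is a unique partition of `{1, …, d}` into `t` subsets `E₁, …, E_t` such that
(i) `∑_{h ∈ Eᵢ} p^{l_h} = p^{(i−1)δ}·λᵢ` for every `i`;
(ii) each `Eᵢ` is an interval of consecutive indices; and
(iii) `card E₁ ≤ λ₁`. -/
theorem stmt3 (p : ℕ) (hp : p.Prime) (t : ℕ) (ht : 0 < t) (lam : Fin t → ℕ)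
    (hlam_pos : ∀ i, 0 < lam i) (d : ℕ) (hd : ∑ i : Fin t, lam i = d)
    (δ : ℕ) (hδ : ∀ i, lam i < δ)
    (hlen : ∀ i : Fin t, ∀ s : ℕ, 1 ≤ s → s ≤ d * p ^ lam i - lam i →
      d < padicLength p (p ^ δ - s))
    (l : Fin d → ℕ) (hl : Monotone l)
    (hsum : ∑ i : Fin t, lam i * p ^ (i.val * δ) = ∑ h : Fin d, p ^ l h) :
    ∃! E : Fin t → Finset (Fin d),
      (∀ i j, i ≠ j → Disjoint (E i) (E j)) ∧
      (Finset.univ.biUnion E = Finset.univ) ∧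
      (∀ i, ∑ h ∈ E i, p ^ l h = p ^ (i.val * δ) * lam i) ∧
      (∀ i, ∃ a b : Fin d, E i = Finset.Icc a b) ∧
      (E ⟨0, ht⟩).card ≤ lam ⟨0, ht⟩ :=
  stmt3_general p hp t ht lam hlam_pos d hd δ hlen l hl hsum
end

section
/- Let p be a prime number, let d ≥ 1 and λ_1 ≥ 1 be natural numbers, and let δ and N be natural numbers such that for every natural number s with 1 ≤ s ≤ d·p^{λ_1} − λ_1, the p-adic length of p^δ − s is strictly greater than d. Suppose l_1 ≤ l_2 ≤ … ≤ l_d is a non-decreasing sequence of natural numbers satisfying p^{l_1} + p^{l_2} + … + p^{l_d} = λ_1 + p^{δ}·N. Let τ be the number of indices i with p^{l_i} ≤ λ_1. Then ∑_{i=1}^{τ} p^{l_i} = λ_1. -/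
open Nat

@[simp]
lemma padicLength_zero (p : ℕ) : padicLength p 0 = 0 := by simp [padicLength]

lemma padicLength_pow {p : ℕ} (hp : 1 < p) (k : ℕ) : padicLength p (p ^ k) = 1 := by
  have h := digits_base_pow_mul (k := k) hp one_pos
  rw [mul_one] at h
  simp [padicLength, h, digits_of_lt p 1 one_ne_zero hp]

lemma padicLength_add_pow_mul {p e x : ℕ} (hp : 1 < p) (hx : x < p ^ e) (y : ℕ) :
    padicLength p (x + p ^ e * y) = padicLength p x + padicLength p y := by
  rcases Nat.eq_zero_or_pos y with rfl | hy
  · simp [padicLength]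
  have hlen : (p.digits x).length ≤ e := (digits_length_le_iff hp x).2 hx
  have hdigits :=
    digits_append_zeroes_append_digits (k := e - (p.digits x).length) (n := x) hp hy
  rw [Nat.add_sub_cancel' hlen] at hdigits
  simp [padicLength, ← hdigits]

/-- Legendre's formula turns `a! * b! ∣ (a + b)!` into subadditivity of the digit sum. -/
lemma padicLength_add_le {p : ℕ} (hp : p.Prime) (a b : ℕ) :
    padicLength p (a + b) ≤ padicLength p a + padicLength p b := by
  have := Fact.mk hp
  have hval : padicValNat p a ! + padicValNat p b ! ≤ padicValNat p (a + b)! := by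
    rw [← padicValNat.mul (factorial_ne_zero a) (factorial_ne_zero b)]
    exact padicValNat_dvd_iff_le (factorial_ne_zero _) |>.1
      (pow_padicValNat_dvd.trans (factorial_mul_factorial_dvd_factorial_add a b))
  have hlegendre := Nat.mul_le_mul_left (p - 1) hval
  rw [mul_add, sub_one_mul_padicValNat_factorial, sub_one_mul_padicValNat_factorial,
    sub_one_mul_padicValNat_factorial] at hlegendre
  have ha := digit_sum_le p a
  have hb := digit_sum_le p b
  have hab := digit_sum_le p (a + b)
  unfold padicLength
  omega

lemma padicLength_sum_pow_le {ι : Type*} {p : ℕ} (hp : p.Prime) (s : Finset ι) (f : ι → ℕ) :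
    padicLength p (∑ i ∈ s, p ^ f i) ≤ s.card := by
  calc padicLength p (∑ i ∈ s, p ^ f i) ≤ ∑ i ∈ s, padicLength p (p ^ f i) :=
        Finset.le_sum_of_subadditive _ (padicLength_zero p).le (padicLength_add_le hp) _ _
    _ = s.card := by simp [padicLength_pow hp.one_lt]

lemma padicLength_pow_sub_le_of_dvd {p e s m : ℕ} (hp : 1 < p) (hs : 0 < s) (hse : s ≤ p ^ e)
    (hdvd : p ^ e ∣ m + s) : padicLength p (p ^ e - s) ≤ padicLength p m := by
  obtain ⟨N, hN⟩ := hdvd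
  have hN0 : N ≠ 0 := by rintro rfl; omega
  have hm : m = (p ^ e - s) + p ^ e * (N - 1) := by
    rw [Nat.mul_sub_one]
    have : p ^ e ≤ p ^ e * N := Nat.le_mul_of_pos_right _ (Nat.pos_of_ne_zero hN0)
    omega
  rw [hm, padicLength_add_pow_mul hp (by omega)]
  omega

lemma eq_zero_of_add_pow_mul_eq_sum_pow {ι : Type*} {p e r N : ℕ} (hp : 1 < p) (s : Finset ι)
    (f : ι → ℕ) (hre : r < p ^ e) (hrf : ∀ i ∈ s, r < p ^ f i)
    (h : r + p ^ e * N = ∑ i ∈ s, p ^ f i) : r = 0 := by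
  by_contra hr
  -- `p ^ k` is the least power of `p` exceeding `r`, so it divides every larger power.
  set k := log p r + 1
  have hk : ∀ {j}, r < p ^ j → p ^ k ∣ p ^ j :=
    fun hj => pow_dvd_pow p (log_lt_of_lt_pow hr hj)
  have hsum : p ^ k ∣ r + p ^ e * N := h ▸ Finset.dvd_sum fun i hi => hk (hrf i hi)
  have hdvd : p ^ k ∣ r := (Nat.dvd_add_left (dvd_mul_of_dvd_left (hk hre) N)).1 hsum
  exact hr (eq_zero_of_dvd_of_lt hdvd (lt_pow_succ_log_self hp r))

lemma lt_pow_of_forall_lt_padicLength_pow_sub {p d e W : ℕ} (hp : 0 < p)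
    (h : ∀ s, 1 ≤ s → s ≤ W → d < padicLength p (p ^ e - s)) : W < p ^ e := by
  by_contra! hW
  simpa using h _ (one_le_pow _ _ hp) hW

lemma two_mul_le_pow {p : ℕ} (hp : 2 ≤ p) (n : ℕ) : 2 * n ≤ p ^ n := by
  induction n with
  | zero => simp
  | succ n ih =>
    have := Nat.one_le_pow n p (by omega)
    have := Nat.lt_pow_self (n := n) (by omega : 1 < p)
    rw [pow_succ]
    nlinarith

theorem stmt4_general (p : ℕ) (hp : p.Prime) (d : ℕ) (hd : 1 ≤ d)
    (lam1 : ℕ) (δ N : ℕ)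
    (hlen : ∀ s : ℕ, 1 ≤ s → s ≤ d * p ^ lam1 - lam1 →
      d < padicLength p (p ^ δ - s))
    (l : Fin d → ℕ)
    (hsum : ∑ i : Fin d, p ^ l i = lam1 + p ^ δ * N) :
    ∑ i ∈ Finset.univ.filter (fun i : Fin d => p ^ l i ≤ lam1), p ^ l i = lam1 := by
  set small := Finset.univ.filter (fun i : Fin d => p ^ l i ≤ lam1)
  set large := Finset.univ.filter (fun i : Fin d => ¬p ^ l i ≤ lam1)
  set A := ∑ i ∈ small, p ^ l i
  set B := ∑ i ∈ large, p ^ l i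
  have hAB : A + B = lam1 + p ^ δ * N := (Finset.sum_filter_add_sum_filter_not _ _ _).trans hsum
  have hW : d * p ^ lam1 - lam1 < p ^ δ := lt_pow_of_forall_lt_padicLength_pow_sub hp.pos hlen
  have hA : A ≤ d * lam1 := calc
    A ≤ small.card • lam1 := Finset.sum_le_card_nsmul small _ _ (by simp [small])
    _ = small.card * lam1 := smul_eq_mul ..
    _ ≤ d * lam1 := Nat.mul_le_mul_right _ ((Finset.card_filter_le _ _).trans (by simp))
  have hB : padicLength p B ≤ d :=
    (padicLength_sum_pow_le hp large l).trans ((Finset.card_filter_le _ _).trans (by simp))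
  rcases le_or_gt A lam1 with hle | hlt
  · have hlamW : 2 * lam1 ≤ d * p ^ lam1 :=
      (two_mul_le_pow hp.two_le lam1).trans (Nat.le_mul_of_pos_left _ hd)
    have hdeficit : lam1 - A = 0 :=
      eq_zero_of_add_pow_mul_eq_sum_pow (e := δ) (N := N) hp.one_lt large l (by omega)
        (fun i hi => by simp [large] at hi; omega) (by omega)
    omega
  · have hdm : d * lam1 ≤ d * p ^ lam1 := Nat.mul_le_mul_left d (Nat.lt_pow_self hp.one_lt).le
    have hlong := (hlen (A - lam1) (by omega) (by omega)).trans_le <|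
      padicLength_pow_sub_le_of_dvd (m := B) hp.one_lt (by omega) (by omega) ⟨N, by omega⟩
    omega

/-- Let `p` be prime, `d ≥ 1`, `λ₁ ≥ 1`, and `δ, N` naturals such that for every
`1 ≤ s ≤ d·p^{λ₁} − λ₁` the `p`-adic length of `p^δ − s` is `> d`.
If `l₁ ≤ … ≤ l_d` satisfies `p^{l₁} + ⋯ + p^{l_d} = λ₁ + p^δ·N`, and `τ` is the number
of indices `i` with `p^{l_i} ≤ λ₁`, then the sum of `p^{l_i}` over these first `τ`
indices equals `λ₁`. -/
theorem stmt4 (p : ℕ) (hp : p.Prime) (d : ℕ) (hd : 1 ≤ d)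
    (lam1 : ℕ) (hlam1 : 1 ≤ lam1) (δ N : ℕ)
    (hlen : ∀ s : ℕ, 1 ≤ s → s ≤ d * p ^ lam1 - lam1 →
      d < padicLength p (p ^ δ - s))
    (l : Fin d → ℕ) (hl : Monotone l)
    (hsum : ∑ i : Fin d, p ^ l i = lam1 + p ^ δ * N) :
    ∑ i ∈ Finset.univ.filter (fun i : Fin d => p ^ l i ≤ lam1), p ^ l i = lam1 :=
  stmt4_general p hp d hd lam1 δ N hlen l hsum
end
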